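/- arXiv:2310.15628 — 7 statements merged into one kernel-verified Lean document; each statement's English description precedes it below -/
import Mathlib

section
/- Let n be a natural number with n > 1 and let h : ℕ → ℝ be a multiplicative arithmetic function with 0 ≤ h(x) ≤ 1 for all x ≥ 1. Define d⁽ⁿ⁾(x,y) = 0 if x = y and d⁽ⁿ⁾(x,y) = 2 − h(gcd(x,n)) − h(gcd(y,n)) if x ≠ y, for x,y ∈ ℤ. Then d⁽ⁿ⁾ is a pseudometric on ℤ. If moreover h(x) < 1 for all x > 1, then d⁽ⁿ⁾ restricted to the set D_n of positive divisors of n is a metric, i.e. d⁽ⁿ⁾(x,y) = 0 implies x = y for divisors x, y of n. -/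
/-- For a multiplicative arithmetic function `h : ℕ → ℝ` with
`0 ≤ h x ≤ 1`, the function `d⁽ⁿ⁾ x y = if x = y then 0 else 2 - h (gcd x n) - h (gcd y n)`
is a pseudometric on ℤ; if moreover `h x < 1` for `x > 1`, its restriction to the
positive divisors of `n` is a metric. -/
theorem stmt_2 (n : ℕ) (hn : 1 < n) (h : ℕ → ℝ)
    (h_one : h 1 = 1)
    (h_mul : ∀ x y : ℕ, 0 < x → 0 < y → Nat.Coprime x y → h (x * y) = h x * h y)
    (h_bounds : ∀ x : ℕ, 1 ≤ x → 0 ≤ h x ∧ h x ≤ 1)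
    (dn : ℤ → ℤ → ℝ)
    (hdn : ∀ x y : ℤ, dn x y =
      if x = y then 0 else 2 - h (Int.gcd x n) - h (Int.gcd y n)) :
    ((∀ x : ℤ, dn x x = 0) ∧
     (∀ x y : ℤ, dn x y = dn y x) ∧
     (∀ x y z : ℤ, dn x z ≤ dn x y + dn y z)) ∧
    ((∀ x : ℕ, 1 < x → h x < 1) →
      ∀ x y : ℕ, x ∣ n → y ∣ n → dn (x : ℤ) (y : ℤ) = 0 → x = y) := by
  have hnpos : 0 < n := by omega
  have hg : ∀ x : ℤ, 1 ≤ Int.gcd x n := by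
    intro x
    have : Int.gcd x n ≠ 0 := by
      simp [Int.gcd_eq_zero_iff]
      omega
    omega
  have hb : ∀ x : ℤ, 0 ≤ h (Int.gcd x n) ∧ h (Int.gcd x n) ≤ 1 :=
    fun x => h_bounds _ (hg x)
  have hnonneg : ∀ x y : ℤ, 0 ≤ dn x y := by
    intro x y
    rw [hdn]
    split
    · exact le_refl 0
    · have h1 := hb x; have h2 := hb y; linarith [h1.1, h1.2, h2.1, h2.2]
  refine ⟨⟨fun x => by rw [hdn]; simp, fun x y => ?_, fun x y z => ?_⟩, ?_⟩
  · rw [hdn, hdn]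
    by_cases hxy : x = y
    · simp [hxy]
    · rw [if_neg hxy, if_neg (Ne.symm hxy)]; ring
  · by_cases hxz : x = z
    · rw [hdn x z, if_pos hxz]
      exact add_nonneg (hnonneg x y) (hnonneg y z)
    · by_cases hxy : x = y
      · subst hxy
        rw [hdn x x, if_pos rfl]; linarith [hnonneg x z]
      · by_cases hyz : y = z
        · subst hyz
          rw [hdn y y, if_pos rfl]; linarith [hnonneg x y]
        · rw [hdn x z, hdn x y, hdn y z, if_neg hxz, if_neg hxy, if_neg hyz]
          have := hb y
          linarith [this.1, this.2]
  · intro hlt x y hx hy hd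
    by_contra hne
    have hxne : (x : ℤ) ≠ y := by exact_mod_cast hne
    rw [hdn, if_neg hxne] at hd
    have hgx : Int.gcd (x : ℤ) n = x := by
      rw [Int.gcd_natCast_natCast]; exact Nat.gcd_eq_left hx
    have hgy : Int.gcd (y : ℤ) n = y := by
      rw [Int.gcd_natCast_natCast]; exact Nat.gcd_eq_left hy
    rw [hgx, hgy] at hd
    have hxpos : 0 < x := Nat.pos_of_dvd_of_pos hx hnpos
    have hypos : 0 < y := Nat.pos_of_dvd_of_pos hy hnpos
    have hbx := h_bounds x hxpos
    have hby := h_bounds y hypos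
    have hx1 : h x = 1 := by linarith [hbx.2, hby.2]
    have hy1 : h y = 1 := by linarith
    have hxeq : x = 1 := by
      by_contra h1
      have := hlt x (by omega)
      linarith
    have hyeq : y = 1 := by
      by_contra h1
      have := hlt y (by omega)
      linarith
    exact hne (hxeq.trans hyeq.symm)
end

section
/- Let n be a natural number with n > 1 and let h : ℕ → ℝ be a multiplicative arithmetic function with 0 ≤ h(x) ≤ 1 for all x ≥ 1. Define d⁽ⁿ⁾(x,y) = 0 if x = y and d⁽ⁿ⁾(x,y) = 1 − h(gcd(x,n))·h(gcd(y,n)) if x ≠ y, for x,y ∈ ℤ. Then d⁽ⁿ⁾ is a pseudometric on ℤ. If moreover h(x) < 1 for all x > 1, then d⁽ⁿ⁾ restricted to the set D_n of positive divisors of n is a metric, i.e. d⁽ⁿ⁾(x,y) = 0 implies x = y for divisors x, y of n. -/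
/-- For a multiplicative arithmetic function `h : ℕ → ℝ` with
`0 ≤ h x ≤ 1`, the function `d⁽ⁿ⁾ x y = if x = y then 0 else 1 - h (gcd x n) * h (gcd y n)`
is a pseudometric on ℤ; if moreover `h x < 1` for `x > 1`, its restriction to the
positive divisors of `n` is a metric. -/
theorem stmt_3 (n : ℕ) (hn : 1 < n) (h : ℕ → ℝ)
    (h_one : h 1 = 1)
    (h_mul : ∀ x y : ℕ, 0 < x → 0 < y → Nat.Coprime x y → h (x * y) = h x * h y)
    (h_bounds : ∀ x : ℕ, 1 ≤ x → 0 ≤ h x ∧ h x ≤ 1)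
    (dn : ℤ → ℤ → ℝ)
    (hdn : ∀ x y : ℤ, dn x y =
      if x = y then 0 else 1 - h (Int.gcd x n) * h (Int.gcd y n)) :
    ((∀ x : ℤ, dn x x = 0) ∧
     (∀ x y : ℤ, dn x y = dn y x) ∧
     (∀ x y z : ℤ, dn x z ≤ dn x y + dn y z)) ∧
    ((∀ x : ℕ, 1 < x → h x < 1) →
      ∀ x y : ℕ, x ∣ n → y ∣ n → dn (x : ℤ) (y : ℤ) = 0 → x = y) := by
  have hnpos : (0 : ℕ) < n := by omega
  have hg : ∀ x : ℤ, 1 ≤ Int.gcd x n := by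
    intro x
    have : (n : ℤ) ≠ 0 := by exact_mod_cast hnpos.ne'
    have := Int.gcd_pos_of_ne_zero_right x this
    omega
  have hb : ∀ x : ℤ, 0 ≤ h (Int.gcd x n) ∧ h (Int.gcd x n) ≤ 1 :=
    fun x => h_bounds _ (hg x)
  constructor
  · refine ⟨fun x => by simp [hdn], fun x y => ?_, fun x y z => ?_⟩
    · rw [hdn, hdn]
      by_cases hxy : x = y
      · simp [hxy]
      · rw [if_neg hxy, if_neg (Ne.symm hxy)]; ring
    · rw [hdn, hdn, hdn]
      obtain ⟨ha0, ha1⟩ := hb x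
      obtain ⟨hb0, hb1⟩ := hb y
      obtain ⟨hc0, hc1⟩ := hb z
      by_cases hxz : x = z
      · subst hxz
        rw [if_pos rfl]
        by_cases hxy : x = y
        · subst hxy; simp
        · rw [if_neg hxy, if_neg (Ne.symm hxy)]
          nlinarith
      · rw [if_neg hxz]
        by_cases hxy : x = y
        · subst hxy
          rw [if_pos rfl, if_neg hxz]; simp
        · rw [if_neg hxy]
          by_cases hyz : y = z
          · subst hyz; rw [if_pos rfl]; simp
          · rw [if_neg hyz]
            nlinarith
  · intro hlt x y hxn hyn hd
    by_contra hne
    have hne' : (x : ℤ) ≠ (y : ℤ) := by exact_mod_cast hne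
    rw [hdn, if_neg hne'] at hd
    have hgx : Int.gcd (x : ℤ) n = x := by
      simp [Int.gcd_natCast_natCast, Nat.gcd_eq_left hxn]
    have hgy : Int.gcd (y : ℤ) n = y := by
      simp [Int.gcd_natCast_natCast, Nat.gcd_eq_left hyn]
    rw [hgx, hgy] at hd
    have hx1 : 1 ≤ x := Nat.pos_of_dvd_of_pos hxn hnpos
    have hy1 : 1 ≤ y := Nat.pos_of_dvd_of_pos hyn hnpos
    obtain ⟨hx0, hxle⟩ := h_bounds x hx1
    obtain ⟨hy0, hyle⟩ := h_bounds y hy1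
    have hhx : h x = 1 := by nlinarith
    have hhy : h y = 1 := by nlinarith
    have hxe : x = 1 := by
      by_contra hx
      have := hlt x (by omega)
      linarith
    have hye : y = 1 := by
      by_contra hy
      have := hlt y (by omega)
      linarith
    exact hne (hxe.trans hye.symm)
end

section
/- For a positive natural number z, let ld(z) denote the sum over the distinct prime divisors p of z of 1/p (as a rational number). Then for all squarefree positive naturals x and y with x ≠ y, ld(x) ≠ ld(y); that is, the logarithmic derivative takes pairwise distinct values on squarefree numbers. -/
private lemma aux_no_mem (A B : Finset ℕ) (hA : ∀ p ∈ A, p.Prime) (hB : ∀ p ∈ B, p.Prime)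
    (hdisj : Disjoint A B)
    (h : ∑ p ∈ A, (1 : ℚ) / p = ∑ p ∈ B, (1 : ℚ) / p)
    (q : ℕ) (hq : q ∈ A) : False := by
  classical
  set U : Finset ℕ := A ∪ B with hUdef
  have hU : ∀ p ∈ U, p.Prime := by
    intro p hp
    rcases Finset.mem_union.1 hp with hp | hp
    · exact hA p hp
    · exact hB p hp
  have hqU : q ∈ U := Finset.mem_union_left _ hq
  have hqP : q.Prime := hA q hq
  -- per-term identity over ℚ
  have key : ∀ p ∈ U, (∏ r ∈ U, (r : ℚ)) * ((1 : ℚ) / p)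
      = ((∏ r ∈ U.erase p, r : ℕ) : ℚ) := by
    intro p hp
    have hp0 : (p : ℚ) ≠ 0 := by
      exact_mod_cast (hU p hp).pos.ne'
    rw [← Finset.mul_prod_erase _ _ hp]
    push_cast
    field_simp
  have hNat : (∑ p ∈ A, ∏ r ∈ U.erase p, r) = ∑ p ∈ B, ∏ r ∈ U.erase p, r := by
    have h2 := congrArg (fun t => (∏ r ∈ U, (r : ℚ)) * t) h
    simp only [Finset.mul_sum] at h2
    rw [Finset.sum_congr rfl (fun p hp => key p (Finset.mem_union_left _ hp)),
        Finset.sum_congr rfl (fun p hp => key p (Finset.mem_union_right _ hp))] at h2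
    exact_mod_cast h2
  haveI : Fact q.Prime := ⟨hqP⟩
  -- reduce mod q
  have hcast := congrArg (fun n : ℕ => (n : ZMod q)) hNat
  simp only [Nat.cast_sum] at hcast
  have hdvd : ∀ p ∈ U, p ≠ q → ((∏ r ∈ U.erase p, r : ℕ) : ZMod q) = 0 := by
    intro p hp hpq
    rw [ZMod.natCast_eq_zero_iff]
    exact Finset.dvd_prod_of_mem _ (Finset.mem_erase.2 ⟨Ne.symm hpq, hqU⟩)
  have hRHS : (∑ p ∈ B, ((∏ r ∈ U.erase p, r : ℕ) : ZMod q)) = 0 := by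
    apply Finset.sum_eq_zero
    intro p hp
    refine hdvd p (Finset.mem_union_right _ hp) (fun e => ?_)
    exact Finset.disjoint_left.1 hdisj hq (e ▸ hp)
  have hLHS : (∑ p ∈ A, ((∏ r ∈ U.erase p, r : ℕ) : ZMod q))
      = ((∏ r ∈ U.erase q, r : ℕ) : ZMod q) := by
    apply Finset.sum_eq_single q
    · intro p hp hpq
      exact hdvd p (Finset.mem_union_left _ hp) hpq
    · intro habs; exact absurd hq habs
  have hne : ((∏ r ∈ U.erase q, r : ℕ) : ZMod q) ≠ 0 := by
    intro h0
    rw [ZMod.natCast_eq_zero_iff] at h0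
    have hcop : Nat.Coprime q (∏ r ∈ U.erase q, r) := by
      apply Nat.Coprime.prod_right
      intro r hr
      have hrP := hU r (Finset.mem_of_mem_erase hr)
      exact (Nat.coprime_primes hqP hrP).2 (Finset.ne_of_mem_erase hr).symm
    exact hqP.one_lt.ne' (hcop.eq_one_of_dvd h0)
  rw [hLHS, hRHS] at hcast
  exact hne hcast

private lemma prime_sets_eq (A B : Finset ℕ) (hA : ∀ p ∈ A, p.Prime) (hB : ∀ p ∈ B, p.Prime)
    (h : ∑ p ∈ A, (1 : ℚ) / p = ∑ p ∈ B, (1 : ℚ) / p) : A = B := by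
  classical
  have hsum : ∑ p ∈ A \ B, (1 : ℚ) / p = ∑ p ∈ B \ A, (1 : ℚ) / p := by
    have h1 : ∑ p ∈ A \ B, (1 : ℚ) / p + ∑ p ∈ A ∩ B, (1 : ℚ) / p = ∑ p ∈ A, (1 : ℚ) / p := by
      rw [← Finset.sum_union (Finset.disjoint_sdiff_inter _ _), Finset.sdiff_union_inter]
    have h2 : ∑ p ∈ B \ A, (1 : ℚ) / p + ∑ p ∈ B ∩ A, (1 : ℚ) / p = ∑ p ∈ B, (1 : ℚ) / p := by
      rw [← Finset.sum_union (Finset.disjoint_sdiff_inter _ _), Finset.sdiff_union_inter]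
    rw [← h1, ← h2, Finset.inter_comm B A] at h
    linarith
  have hdisj : Disjoint (A \ B) (B \ A) := disjoint_sdiff_sdiff
  have hA' : ∀ p ∈ A \ B, p.Prime := fun p hp => hA p (Finset.mem_sdiff.1 hp).1
  have hB' : ∀ p ∈ B \ A, p.Prime := fun p hp => hB p (Finset.mem_sdiff.1 hp).1
  have he1 : A \ B = ∅ := by
    by_contra hne
    obtain ⟨q, hq⟩ := Finset.nonempty_iff_ne_empty.2 hne
    exact aux_no_mem _ _ hA' hB' hdisj hsum q hq
  have he2 : B \ A = ∅ := by
    by_contra hne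
    obtain ⟨q, hq⟩ := Finset.nonempty_iff_ne_empty.2 hne
    exact aux_no_mem _ _ hB' hA' hdisj.symm hsum.symm q hq
  apply Finset.Subset.antisymm
  · exact (Finset.sdiff_eq_empty_iff_subset.1 he1)
  · exact (Finset.sdiff_eq_empty_iff_subset.1 he2)

/-- The logarithmic derivative `ld z = ∑_{p ∣ z prime} 1/p` takes
pairwise distinct values on squarefree positive naturals. -/
theorem stmt_12 (ld : ℕ → ℚ)
    (hld : ∀ z : ℕ, ld z = ∑ p ∈ z.primeFactors, (1 : ℚ) / p) :
    ∀ x y : ℕ, Squarefree x → Squarefree y → x ≠ y → ld x ≠ ld y := by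
  intro x y hx hy hxy h
  rw [hld, hld] at h
  have := prime_sets_eq _ _ (fun p hp => Nat.prime_of_mem_primeFactors hp)
    (fun p hp => Nat.prime_of_mem_primeFactors hp) h
  apply hxy
  rw [← Nat.prod_primeFactors_of_squarefree hx, ← Nat.prod_primeFactors_of_squarefree hy, this]
end

section
/- Let σ(z) denote the sum of the positive divisors of z. Assume there is no odd multiply perfect number, i.e. there is no odd natural number m > 1 with m ∣ σ(m). Then for all coprime positive natural numbers x, y with x ≠ y, one has σ(x)/x ≠ σ(y)/y (as rational numbers). -/
lemma aux_sum_div_gt (n : ℕ) (hn : 1 < n) : n < ∑ d ∈ n.divisors, d := by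
  have hsub : ({1, n} : Finset ℕ) ⊆ n.divisors := by
    intro d hd
    simp only [Finset.mem_insert, Finset.mem_singleton] at hd
    have hn0 : n ≠ 0 := by omega
    rcases hd with rfl | rfl
    · exact Nat.one_mem_divisors.mpr hn0
    · exact Nat.mem_divisors_self _ hn0
  have h1 : ∑ d ∈ ({1, n} : Finset ℕ), d ≤ ∑ d ∈ n.divisors, d :=
    Finset.sum_le_sum_of_subset hsub
  have h2 : ∑ d ∈ ({1, n} : Finset ℕ), d = 1 + n := by
    rw [Finset.sum_insert (by simp; omega), Finset.sum_singleton]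
  omega

/-- If there is no odd multiply perfect number (no odd `m > 1` with
`m ∣ σ(m)`), then `σ(x)/x ≠ σ(y)/y` for all distinct coprime positive naturals. -/
theorem stmt_15
    (hperf : ¬ ∃ m : ℕ, 1 < m ∧ Odd m ∧ m ∣ (∑ d ∈ m.divisors, d)) :
    ∀ x y : ℕ, 0 < x → 0 < y → Nat.Coprime x y → x ≠ y →
      ((∑ d ∈ x.divisors, d : ℚ)) / x ≠ ((∑ d ∈ y.divisors, d : ℚ)) / y := by
  intro x y hx hy hco hne heq
  set sx := ∑ d ∈ x.divisors, d with hsx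
  set sy := ∑ d ∈ y.divisors, d with hsy
  have hxQ : (x:ℚ) ≠ 0 := by positivity
  have hyQ : (y:ℚ) ≠ 0 := by positivity
  have hkey : sx * y = sy * x := by
    have : (sx:ℚ) * y = sy * x := by
      rw [hsx, hsy]
      push_cast
      field_simp at heq
      linarith
    exact_mod_cast this
  have hdx : x ∣ sx := by
    have h1 : x ∣ sx * y := by rw [hkey]; exact dvd_mul_left x sy
    exact hco.dvd_of_dvd_mul_right h1
  have hdy : y ∣ sy := by
    have h1 : y ∣ sy * x := by rw [← hkey]; exact dvd_mul_left y sx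
    exact hco.symm.dvd_of_dvd_mul_right h1
  have hx1 : 1 < x := by
    rcases Nat.lt_or_ge 1 x with h | h
    · exact h
    · exfalso
      have hx1 : x = 1 := by omega
      have hsx1 : sx = 1 := by simp [hsx, hx1]
      have hy1 : 1 < y := by
        rcases Nat.lt_or_ge 1 y with h' | h'
        · exact h'
        · omega
      have := aux_sum_div_gt y hy1
      rw [hx1, hsx1] at hkey
      omega
  have hy1 : 1 < y := by
    rcases Nat.lt_or_ge 1 y with h | h
    · exact h
    · exfalso
      have hy1 : y = 1 := by omega
      have hsy1 : sy = 1 := by simp [hsy, hy1]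
      have := aux_sum_div_gt x hx1
      rw [hy1, hsy1] at hkey
      omega
  have hodd : Odd x ∨ Odd y := by
    by_contra h
    push_neg at h
    obtain ⟨h1, h2⟩ := h
    have e1 : 2 ∣ x := (Nat.not_odd_iff_even.mp h1).two_dvd
    have e2 : 2 ∣ y := (Nat.not_odd_iff_even.mp h2).two_dvd
    have := Nat.dvd_gcd e1 e2
    rw [Nat.Coprime] at hco
    rw [hco] at this
    omega
  rcases hodd with h | h
  · exact hperf ⟨x, hx1, h, hdx⟩
  · exact hperf ⟨y, hy1, h, hdy⟩
end

section
/- Let σ(z) denote the sum of the positive divisors of z. Then for all squarefree positive natural numbers x, y with x ≠ y, one has σ(x)/x ≠ σ(y)/y (as rational numbers); that is, the function σ(z)/z takes pairwise distinct values on squarefree numbers. -/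
open Nat Finset

private lemma sigma_prime {p : ℕ} (hp : p.Prime) : ∑ d ∈ p.divisors, d = p + 1 := by
  rw [hp.divisors]
  rw [Finset.sum_pair hp.one_lt.ne]
  omega

private lemma sf_sigma {n : ℕ} (hn : Squarefree n) :
    ∑ d ∈ n.divisors, d = ∏ p ∈ n.primeFactors, (p + 1) := by
  rw [Nat.sum_divisors hn.ne_zero]
  refine Finset.prod_congr rfl fun p hp => ?_
  have h1 : n.factorization p = 1 := by
    have hle := (Nat.squarefree_iff_factorization_le_one hn.ne_zero).1 hn p
    have hpos : 0 < n.factorization p :=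
      Nat.Prime.factorization_pos_of_dvd (Nat.prime_of_mem_primeFactors hp) hn.ne_zero
        (Nat.dvd_of_mem_primeFactors hp)
    omega
  rw [h1]
  simp [Finset.sum_range_succ, add_comm]

private lemma sigma_factor {p n : ℕ} (hp : p.Prime) (hn : Squarefree n) (hpn : p ∣ n) :
    ∑ d ∈ n.divisors, d = (p + 1) * ∑ d ∈ (n / p).divisors, d := by
  obtain ⟨m, rfl⟩ := hpn
  have hpm : ¬ p ∣ m := by
    intro h
    exact hp.one_lt.ne' (Nat.isUnit_iff.1 (hn p (mul_dvd_mul_left p h)))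
  have hc : Nat.Coprime p m := (hp.coprime_iff_not_dvd).2 hpm
  rw [hc.sum_divisors_mul, sigma_prime hp, Nat.mul_div_cancel_left m hp.pos]

private lemma contrad {x y p : ℕ} (hx : Squarefree x) (hy : Squarefree y)
    (heq : x * ∑ d ∈ y.divisors, d = y * ∑ d ∈ x.divisors, d)
    (hp : p.Prime) (hpx : p ∣ x) (hpy : ¬ p ∣ y)
    (hmax : ∀ q ∈ x.primeFactors ∪ y.primeFactors, q ≤ p) : False := by
  have hx0 : x ≠ 0 := hx.ne_zero
  have hy0 : y ≠ 0 := hy.ne_zero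
  have hdvd : p ∣ y * ∑ d ∈ x.divisors, d := heq ▸ Dvd.dvd.mul_right hpx _
  have hpSx : p ∣ ∑ d ∈ x.divisors, d := by
    rcases (hp.dvd_mul).1 hdvd with h | h
    · exact absurd h hpy
    · exact h
  have hxps : Squarefree (x / p) := hx.squarefree_of_dvd (Nat.div_dvd_of_dvd hpx)
  have hfac : ∑ d ∈ x.divisors, d = (p + 1) * ∑ d ∈ (x / p).divisors, d :=
    sigma_factor hp hx hpx
  have hpp1 : ¬ p ∣ p + 1 := by
    intro h
    have h1 : p ∣ 1 := (Nat.dvd_add_right (dvd_refl p)).1 h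
    have h2 := Nat.le_of_dvd one_pos h1
    have h3 := hp.one_lt
    omega
  have hpS : p ∣ ∑ d ∈ (x / p).divisors, d := by
    rw [hfac] at hpSx
    rcases (hp.dvd_mul).1 hpSx with h | h
    · exact absurd h hpp1
    · exact h
  rw [sf_sigma hxps] at hpS
  obtain ⟨q, hq, hpq⟩ := (hp.prime.dvd_finset_prod_iff _).1 hpS
  have hqp : q.Prime := Nat.prime_of_mem_primeFactors hq
  have hqx : q ∣ x := (Nat.dvd_of_mem_primeFactors hq).trans (Nat.div_dvd_of_dvd hpx)
  have hqle : q ≤ p := hmax q (Finset.mem_union_left _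
    (Nat.mem_primeFactors.2 ⟨hqp, hqx, hx0⟩))
  have hpxp : ¬ p ∣ x / p := by
    intro h
    have h2 : p * p ∣ x := by
      have hx' : p * (x / p) = x := Nat.mul_div_cancel' hpx
      exact hx' ▸ mul_dvd_mul_left p h
    exact hp.one_lt.ne' (Nat.isUnit_iff.1 (hx p h2))
  have hqne : q ≠ p := by
    rintro rfl
    exact hpxp (Nat.dvd_of_mem_primeFactors hq)
  have hpeq : p = q + 1 := by
    have h1 : p ≤ q + 1 := Nat.le_of_dvd (Nat.succ_pos q) hpq
    omega
  have hq2 : q = 2 := by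
    rcases hqp.eq_two_or_odd' with rfl | hodd
    · rfl
    · exfalso
      have : 2 ∣ p := hpeq ▸ hodd.add_one.two_dvd
      have := (Nat.Prime.eq_one_or_self_of_dvd hp 2 this).resolve_left (by norm_num)
      have := hqp.one_lt
      omega
  subst hq2
  have hp3 : p = 3 := by omega
  subst hp3
  -- x = 6
  have hpfx : x.primeFactors = {2, 3} := by
    ext r
    simp only [Finset.mem_insert, Finset.mem_singleton]
    constructor
    · intro hr
      have hrp := Nat.prime_of_mem_primeFactors hr
      have hrle : r ≤ 3 := hmax r (Finset.mem_union_left _ hr)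
      interval_cases r
      · exact absurd hrp (by norm_num)
      · exact absurd hrp (by norm_num)
      · left; rfl
      · right; rfl
    · rintro (rfl | rfl)
      · exact Nat.mem_primeFactors.2 ⟨Nat.prime_two, hqx, hx0⟩
      · exact Nat.mem_primeFactors.2 ⟨Nat.prime_three, hpx, hx0⟩
  have hx6 : x = 6 := by
    have := Nat.prod_primeFactors_of_squarefree hx
    rw [hpfx] at this
    simpa using this.symm
  -- y = 1 or 2
  have hpfy : y.primeFactors ⊆ {2} := by
    intro r hr
    have hrp := Nat.prime_of_mem_primeFactors hr
    have hrle : r ≤ 3 := hmax r (Finset.mem_union_right _ hr)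
    have hr3 : r ≠ 3 := by
      rintro rfl
      exact hpy (Nat.dvd_of_mem_primeFactors hr)
    have : r = 2 := by
      interval_cases r
      · exact absurd hrp (by norm_num)
      · exact absurd hrp (by norm_num)
      · rfl
      · exact absurd rfl hr3
    simp [this]
  have hy12 : y = 1 ∨ y = 2 := by
    have hprod := Nat.prod_primeFactors_of_squarefree hy
    rcases Finset.subset_singleton_iff.1 hpfy with h | h <;> rw [h] at hprod
    · left; simpa using hprod.symm
    · right; simpa using hprod.symm
  have h6 : ∑ d ∈ (6 : ℕ).divisors, d = 12 := by decide
  have h1 : ∑ d ∈ (1 : ℕ).divisors, d = 1 := by decide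
  have h2 : ∑ d ∈ (2 : ℕ).divisors, d = 3 := by decide
  subst hx6
  rcases hy12 with rfl | rfl
  · rw [h6, h1] at heq; omega
  · rw [h6, h2] at heq; omega

private lemma key : ∀ n x y : ℕ, x + y ≤ n → Squarefree x → Squarefree y →
    x * ∑ d ∈ y.divisors, d = y * ∑ d ∈ x.divisors, d → x = y := by
  intro n
  induction n with
  | zero => intro x y h _ _ _; omega
  | succ n ih =>
    intro x y hn hx hy heq
    have hx0 : x ≠ 0 := hx.ne_zero
    have hy0 : y ≠ 0 := hy.ne_zero
    by_cases hxy1 : x * y = 1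
    · have := Nat.eq_one_of_mul_eq_one_right hxy1
      have := Nat.eq_one_of_mul_eq_one_left hxy1
      omega
    · have hne : (x * y).primeFactors.Nonempty := by
        rw [Finset.nonempty_iff_ne_empty, Ne, Nat.primeFactors_eq_empty]
        push_neg
        exact ⟨Nat.mul_ne_zero hx0 hy0, hxy1⟩
      set p := (x * y).primeFactors.max' hne with hpdef
      have hpmem : p ∈ (x * y).primeFactors := Finset.max'_mem _ hne
      have hp : p.Prime := Nat.prime_of_mem_primeFactors hpmem
      have hunion : (x * y).primeFactors = x.primeFactors ∪ y.primeFactors :=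
        Nat.primeFactors_mul hx0 hy0
      have hmax : ∀ q ∈ x.primeFactors ∪ y.primeFactors, q ≤ p := by
        intro q hq
        exact Finset.le_max' _ q (hunion ▸ hq)
      have hpxy : p ∣ x * y := Nat.dvd_of_mem_primeFactors hpmem
      rcases (hp.dvd_mul).1 hpxy with hpx | hpy
      · by_cases hpy : p ∣ y
        · -- descend
          have hfx := sigma_factor hp hx hpx
          have hfy := sigma_factor hp hy hpy
          have hxeq : p * (x / p) = x := Nat.mul_div_cancel' hpx
          have hyeq : p * (y / p) = y := Nat.mul_div_cancel' hpy
          have heq' : (x / p) * ∑ d ∈ (y / p).divisors, d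
              = (y / p) * ∑ d ∈ (x / p).divisors, d := by
            have e1 : x * ∑ d ∈ y.divisors, d
                = (p * (p + 1)) * ((x / p) * ∑ d ∈ (y / p).divisors, d) := by
              conv_lhs => rw [← hxeq, hfy]
              ring
            have e2 : y * ∑ d ∈ x.divisors, d
                = (p * (p + 1)) * ((y / p) * ∑ d ∈ (x / p).divisors, d) := by
              conv_lhs => rw [← hyeq, hfx]
              ring
            have h2 := heq
            rw [e1, e2] at h2
            exact Nat.eq_of_mul_eq_mul_left (Nat.mul_pos hp.pos (by omega)) h2
          have hlt : x / p < x := Nat.div_lt_self (Nat.pos_of_ne_zero hx0) hp.one_lt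
          have hlt' : y / p < y := Nat.div_lt_self (Nat.pos_of_ne_zero hy0) hp.one_lt
          have hih := ih (x / p) (y / p) (by omega)
            (hx.squarefree_of_dvd (Nat.div_dvd_of_dvd hpx))
            (hy.squarefree_of_dvd (Nat.div_dvd_of_dvd hpy)) heq'
          rw [← hxeq, ← hyeq, hih]
        · exact absurd (contrad hx hy heq hp hpx hpy hmax) (by simp)
      · by_cases hpx : p ∣ x
        · -- descend, same as above (symmetric), but easier: swap roles
          have hfx := sigma_factor hp hx hpx
          have hfy := sigma_factor hp hy hpy
          have hxeq : p * (x / p) = x := Nat.mul_div_cancel' hpx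
          have hyeq : p * (y / p) = y := Nat.mul_div_cancel' hpy
          have heq' : (x / p) * ∑ d ∈ (y / p).divisors, d
              = (y / p) * ∑ d ∈ (x / p).divisors, d := by
            have e1 : x * ∑ d ∈ y.divisors, d
                = (p * (p + 1)) * ((x / p) * ∑ d ∈ (y / p).divisors, d) := by
              conv_lhs => rw [← hxeq, hfy]
              ring
            have e2 : y * ∑ d ∈ x.divisors, d
                = (p * (p + 1)) * ((y / p) * ∑ d ∈ (x / p).divisors, d) := by
              conv_lhs => rw [← hyeq, hfx]
              ring
            have h2 := heq
            rw [e1, e2] at h2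
            exact Nat.eq_of_mul_eq_mul_left (Nat.mul_pos hp.pos (by omega)) h2
          have hlt : x / p < x := Nat.div_lt_self (Nat.pos_of_ne_zero hx0) hp.one_lt
          have hlt' : y / p < y := Nat.div_lt_self (Nat.pos_of_ne_zero hy0) hp.one_lt
          have hih := ih (x / p) (y / p) (by omega)
            (hx.squarefree_of_dvd (Nat.div_dvd_of_dvd hpx))
            (hy.squarefree_of_dvd (Nat.div_dvd_of_dvd hpy)) heq'
          rw [← hxeq, ← hyeq, hih]
        · exact absurd (contrad hy hx heq.symm hp hpy hpx
            (fun q hq => hmax q (by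
              rcases Finset.mem_union.1 hq with h | h
              exacts [Finset.mem_union_right _ h, Finset.mem_union_left _ h]))) (by simp)

/-- The values `σ(x)/x` are pairwise distinct on squarefree positive
natural numbers. -/
theorem stmt_16 :
    ∀ x y : ℕ, Squarefree x → Squarefree y → x ≠ y →
      ((∑ d ∈ x.divisors, d : ℚ)) / x ≠ ((∑ d ∈ y.divisors, d : ℚ)) / y := by
  intro x y hx hy hxy heq
  have hx0 : (x : ℚ) ≠ 0 := Nat.cast_ne_zero.2 hx.ne_zero
  have hy0 : (y : ℚ) ≠ 0 := Nat.cast_ne_zero.2 hy.ne_zero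
  rw [div_eq_div_iff hx0 hy0] at heq
  have hnat : x * ∑ d ∈ y.divisors, d = y * ∑ d ∈ x.divisors, d := by
    have : ((x * ∑ d ∈ y.divisors, d : ℕ) : ℚ) = ((y * ∑ d ∈ x.divisors, d : ℕ) : ℚ) := by
      push_cast
      linarith [heq]
    exact_mod_cast this
  exact hxy (key (x + y) x y le_rfl hx hy hnat)
end

section
/- Let σ(z) denote the sum of the positive divisors of z. Then for all coprime positive natural numbers x, y with x ≠ y, one has σ(x)/x² ≠ σ(y)/y² (as rational numbers). -/
lemma aux_key : ∀ x : ℕ, 0 < x → (x ^ 2 ∣ ∑ d ∈ x.divisors, d) → x = 1 := by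
  intro x hx hdvd
  by_contra h
  have hx2 : 2 ≤ x := by omega
  have hsub : x.divisors ⊆ Finset.range (x + 1) := by
    intro d hd
    rw [Nat.mem_divisors] at hd
    exact Finset.mem_range.mpr (Nat.lt_succ_of_le (Nat.le_of_dvd hx hd.1))
  have h1 : (∑ d ∈ x.divisors, d) ≤ ∑ d ∈ Finset.range (x + 1), d :=
    Finset.sum_le_sum_of_subset hsub
  have h2 : (∑ d ∈ Finset.range (x + 1), d) * 2 = (x + 1) * x :=
    Finset.sum_range_id_mul_two (x + 1)
  have hpos : 0 < ∑ d ∈ x.divisors, d := by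
    apply Finset.sum_pos
    · intro i hi
      exact Nat.pos_of_mem_divisors hi
    · exact ⟨x, Nat.mem_divisors_self x hx.ne'⟩
  have hle : x ^ 2 ≤ ∑ d ∈ x.divisors, d := Nat.le_of_dvd hpos hdvd
  nlinarith

/-- The values `σ(x)/x²` are pairwise distinct for distinct coprime
positive natural numbers. -/
theorem stmt_17 :
    ∀ x y : ℕ, 0 < x → 0 < y → Nat.Coprime x y → x ≠ y →
      ((∑ d ∈ x.divisors, d : ℚ)) / (x : ℚ) ^ 2 ≠
        ((∑ d ∈ y.divisors, d : ℚ)) / (y : ℚ) ^ 2 := by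
  intro x y hx hy hcop hne heq
  have hxq : (0 : ℚ) < (x : ℚ) ^ 2 := by positivity
  have hyq : (0 : ℚ) < (y : ℚ) ^ 2 := by positivity
  rw [div_eq_div_iff hxq.ne' hyq.ne'] at heq
  have hnat : (∑ d ∈ x.divisors, d) * y ^ 2 = (∑ d ∈ y.divisors, d) * x ^ 2 := by
    rw [← Nat.cast_sum, ← Nat.cast_sum] at heq
    exact_mod_cast heq
  have hcop2 : Nat.Coprime (x ^ 2) (y ^ 2) := Nat.Coprime.pow 2 2 hcop
  have hdx : x ^ 2 ∣ ∑ d ∈ x.divisors, d := by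
    have : x ^ 2 ∣ (∑ d ∈ x.divisors, d) * y ^ 2 := hnat ▸ dvd_mul_left _ _
    exact (Nat.Coprime.dvd_of_dvd_mul_right hcop2 this)
  have hdy : y ^ 2 ∣ ∑ d ∈ y.divisors, d := by
    have : y ^ 2 ∣ (∑ d ∈ y.divisors, d) * x ^ 2 := hnat.symm ▸ dvd_mul_left _ _
    exact (Nat.Coprime.dvd_of_dvd_mul_right hcop2.symm this)
  have := aux_key x hx hdx
  have := aux_key y hy hdy
  omega
end

section
/- Let φ(z) denote Euler's totient function. Then for all coprime positive natural numbers x, y with x ≠ y, one has φ(x)/x ≠ φ(y)/y (as rational numbers). -/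
/-- The values `φ(x)/x` of the normalised Euler totient function are
pairwise distinct for distinct coprime positive natural numbers. -/
theorem stmt_18 :
    ∀ x y : ℕ, 0 < x → 0 < y → Nat.Coprime x y → x ≠ y →
      (Nat.totient x : ℚ) / x ≠ (Nat.totient y : ℚ) / y := by
  intro x y hx hy hcop hne h
  have hxq : (x : ℚ) ≠ 0 := Nat.cast_ne_zero.2 hx.ne'
  have hyq : (y : ℚ) ≠ 0 := Nat.cast_ne_zero.2 hy.ne'
  have hcross : (Nat.totient x : ℚ) * y = (Nat.totient y : ℚ) * x := by
    field_simp at h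
    linarith [h]
  have hnat : Nat.totient x * y = Nat.totient y * x := by
    exact_mod_cast hcross
  have hdx : x ∣ Nat.totient x * y := ⟨Nat.totient y, by linarith [hnat]⟩
  have hx1 : x = 1 := by
    by_contra hx1
    have hlt : Nat.totient x < x := Nat.totient_lt x (lt_of_le_of_ne hx (Ne.symm hx1))
    have hdvd : x ∣ Nat.totient x := (Nat.Coprime.dvd_of_dvd_mul_right hcop hdx)
    have := Nat.le_of_dvd (Nat.totient_pos.2 hx) hdvd
    omega
  have hdy : y ∣ Nat.totient y * x := ⟨Nat.totient x, by linarith [hnat]⟩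
  have hy1 : y = 1 := by
    by_contra hy1
    have hlt : Nat.totient y < y := Nat.totient_lt y (lt_of_le_of_ne hy (Ne.symm hy1))
    have hdvd : y ∣ Nat.totient y := (Nat.Coprime.dvd_of_dvd_mul_right hcop.symm hdy)
    have := Nat.le_of_dvd (Nat.totient_pos.2 hy) hdvd
    omega
  exact hne (hx1.trans hy1.symm)
end
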